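/- With R_{j;m+1} as defined above, R_{j;m+1}(τ, v) = −R_{2m+2−j;m+1}(τ, −v) for all j ∈ ℤ, τ with Im τ > 0, and v ∈ ℂ. -/

import Mathlib

/-!
Substitute `n ↦ -n` in the series for `R_{2m+2-j;m+1}(τ,-v)`; this matches its index set with
that of `R_{j;m+1}(τ,v)`. Termwise, the exponential is invariant under `(n, v) ↦ (-n, -v)`,
`E` is odd, and, since `n + j = 2(m+1)k`, the two sign factors are `sgn(2(m+1)(k-1) + 1/2)`
and `sgn(1/2 - 2(m+1)k)`, which are opposite for every integer `k`.
-/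

noncomputable section

open Complex

/-- Zwegers-type error function `E(x) = 2∫₀ˣ e^{−πu²} du`. -/
def Efun (x : ℝ) : ℝ := 2 * ∫ u in (0 : ℝ)..x, Real.exp (-Real.pi * u ^ 2)

/-- The modified Zwegers function `R_{j;m+1}(τ,v)`: the sum over `n ≡ −j mod 2(m+1)`,
parametrized by `n = −j + 2(m+1)k`, `k ∈ ℤ`. -/
def Rz (m : ℕ) (j : ℤ) (τ v : ℂ) : ℂ :=
  ∑' k : ℤ,
    (((Real.sign (((-j + 2 * ((m : ℤ) + 1) * k : ℤ) : ℝ) + 1 / 2 + (j : ℝ) - 2 * ((m : ℝ) + 1)) -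
        Efun ((((-j + 2 * ((m : ℤ) + 1) * k : ℤ) : ℝ) + 2 * ((m : ℝ) + 1) * (v.im / τ.im)) *
          Real.sqrt (τ.im / ((m : ℝ) + 1)))) : ℝ) : ℂ) *
      Complex.exp (-(Real.pi : ℂ) * I * ((-j + 2 * ((m : ℤ) + 1) * k : ℤ) : ℂ) ^ 2 * τ /
          (2 * ((m : ℂ) + 1)) -
        2 * (Real.pi : ℂ) * I * ((-j + 2 * ((m : ℤ) + 1) * k : ℤ) : ℂ) * v)

theorem Efun_neg (x : ℝ) : Efun (-x) = -Efun x := by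
  have h := intervalIntegral.integral_comp_neg (a := 0) (b := x)
    (fun u => Real.exp (-Real.pi * u ^ 2))
  simp only [neg_zero, neg_sq] at h
  rw [Efun, Efun, ← mul_neg, intervalIntegral.integral_symm (-x) 0, ← h]

theorem Real.sign_mul_sub_one_add_half {c : ℝ} (hc : 1 / 2 < c) (k : ℤ) :
    Real.sign (c * ((k : ℝ) - 1) + 1 / 2) = -Real.sign (1 / 2 - c * k) := by
  rcases le_or_gt 1 k with hk | hk
  · have hk' : (1 : ℝ) ≤ k := by exact_mod_cast hk
    rw [Real.sign_of_pos (by nlinarith), Real.sign_of_neg (by nlinarith), neg_neg]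
  · have hk' : (k : ℝ) ≤ 0 := by exact_mod_cast Int.lt_add_one_iff.mp hk
    rw [Real.sign_of_neg (by nlinarith), Real.sign_of_pos (by nlinarith)]

def rzTerm (m : ℕ) (j : ℤ) (τ v : ℂ) (n : ℤ) : ℂ :=
  (((Real.sign ((n : ℝ) + 1 / 2 + (j : ℝ) - 2 * ((m : ℝ) + 1)) -
      Efun (((n : ℝ) + 2 * ((m : ℝ) + 1) * (v.im / τ.im)) *
        Real.sqrt (τ.im / ((m : ℝ) + 1)))) : ℝ) : ℂ) *
    Complex.exp (-(Real.pi : ℂ) * I * (n : ℂ) ^ 2 * τ / (2 * ((m : ℂ) + 1)) -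
      2 * (Real.pi : ℂ) * I * (n : ℂ) * v)

theorem Rz_eq_tsum_rzTerm (m : ℕ) (j : ℤ) (τ v : ℂ) :
    Rz m j τ v = ∑' k : ℤ, rzTerm m j τ v (-j + 2 * ((m : ℤ) + 1) * k) :=
  rfl

theorem rzTerm_neg (m : ℕ) (j : ℤ) (τ v : ℂ) (k : ℤ) :
    rzTerm m (2 * (m : ℤ) + 2 - j) τ (-v) (-(-j + 2 * ((m : ℤ) + 1) * k)) =
      -rzTerm m j τ v (-j + 2 * ((m : ℤ) + 1) * k) := by
  set n : ℤ := -j + 2 * ((m : ℤ) + 1) * k with hn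
  have hsign : Real.sign (((-n : ℤ) : ℝ) + 1 / 2 + ((2 * (m : ℤ) + 2 - j : ℤ) : ℝ) -
      2 * ((m : ℝ) + 1)) = -Real.sign ((n : ℝ) + 1 / 2 + j - 2 * ((m : ℝ) + 1)) := by
    have hc : (1 / 2 : ℝ) < 2 * ((m : ℝ) + 1) := by linarith [m.cast_nonneg (α := ℝ)]
    have hlhs : ((-n : ℤ) : ℝ) + 1 / 2 + ((2 * (m : ℤ) + 2 - j : ℤ) : ℝ) - 2 * ((m : ℝ) + 1) =
        1 / 2 - 2 * ((m : ℝ) + 1) * k := by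
      rw [hn]; push_cast; ring
    have hrhs : (n : ℝ) + 1 / 2 + j - 2 * ((m : ℝ) + 1) = 2 * ((m : ℝ) + 1) * (k - 1) + 1 / 2 := by
      rw [hn]; push_cast; ring
    rw [hlhs, hrhs, Real.sign_mul_sub_one_add_half hc k, neg_neg]
  have hE : (((-n : ℤ) : ℝ) + 2 * ((m : ℝ) + 1) * ((-v).im / τ.im)) *
        Real.sqrt (τ.im / ((m : ℝ) + 1)) =
      -(((n : ℝ) + 2 * ((m : ℝ) + 1) * (v.im / τ.im)) * Real.sqrt (τ.im / ((m : ℝ) + 1))) := by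
    rw [Complex.neg_im]
    push_cast
    ring
  have hexp : -(Real.pi : ℂ) * I * ((-n : ℤ) : ℂ) ^ 2 * τ / (2 * ((m : ℂ) + 1)) -
        2 * (Real.pi : ℂ) * I * ((-n : ℤ) : ℂ) * (-v) =
      -(Real.pi : ℂ) * I * (n : ℂ) ^ 2 * τ / (2 * ((m : ℂ) + 1)) -
        2 * (Real.pi : ℂ) * I * (n : ℂ) * v := by
    push_cast
    ring
  rw [rzTerm, rzTerm, hsign, hE, hexp, Efun_neg]
  push_cast
  ring

theorem stmt6_general (m : ℕ) (j : ℤ) (τ v : ℂ) :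
    Rz m j τ v = -Rz m (2 * (m : ℤ) + 2 - j) τ (-v) := by
  rw [Rz_eq_tsum_rzTerm, Rz_eq_tsum_rzTerm, ← (Equiv.subLeft (1 : ℤ)).tsum_eq, ← tsum_neg]
  refine tsum_congr fun k => ?_
  have hindex : -(2 * (m : ℤ) + 2 - j) + 2 * ((m : ℤ) + 1) * k =
      -(-j + 2 * ((m : ℤ) + 1) * (1 - k)) := by
    ring
  rw [Equiv.subLeft_apply, hindex, rzTerm_neg, neg_neg]

/-- `R_{j;m+1}(τ, v) = −R_{2m+2−j;m+1}(τ, −v)`. -/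
theorem stmt6 (m : ℕ) (j : ℤ) (τ v : ℂ) (hτ : 0 < τ.im) :
    Rz m j τ v = -Rz m (2 * (m : ℤ) + 2 - j) τ (-v) :=
  stmt6_general m j τ v
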